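/- Truth lemma for FOCL: for every state X of the canonical model and every sentence φ, G^C, X ⊨ φ if and only if φ ∈ X. -/

import Mathlib

/-- Terms: variables or constants. -/
inductive Tm (C : Type) : Type
  | var : ℕ → Tm C
  | const : C → Tm C
deriving DecidableEq

/-- Formulas of first-order coalition logic over a signature ⟨n, C, Ap⟩. -/
inductive Form (n : ℕ) (C : Type) (Ap : Type) : Type
  | atom : Ap → Form n C Ap
  | neg : Form n C Ap → Form n C Ap
  | and : Form n C Ap → Form n C Ap → Form n C Ap
  | box : (Fin n → Tm C) → Form n C Ap → Form n C Ap
  | all : ℕ → Form n C Ap → Form n C Ap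

namespace Form

variable {n : ℕ} {C Ap : Type}

def imp (φ ψ : Form n C Ap) : Form n C Ap := .neg (.and φ (.neg ψ))
def iff (φ ψ : Form n C Ap) : Form n C Ap := .and (imp φ ψ) (imp ψ φ)
def ex (x : ℕ) (φ : Form n C Ap) : Form n C Ap := .neg (.all x (.neg φ))

open Classical in
/-- Substitution of a term for a variable. -/
noncomputable def substT (t : Tm C) (x : ℕ) : Form n C Ap → Form n C Ap
  | .atom p => .atom p
  | .neg φ => .neg (substT t x φ)
  | .and φ ψ => .and (substT t x φ) (substT t x ψ)
  | .box ts φ => .box (fun i => if ts i = .var x then t else ts i) (substT t x φ)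
  | .all y φ => if y = x then .all y φ else .all y (substT t x φ)

/-- Substitution of a constant for a variable. -/
noncomputable def subst (a : C) (x : ℕ) (φ : Form n C Ap) : Form n C Ap := substT (.const a) x φ

/-- Free variables. -/
def FV : Form n C Ap → Finset ℕ
  | .atom _ => ∅
  | .neg φ => FV φ
  | .and φ ψ => FV φ ∪ FV ψ
  | .box ts φ => FV φ ∪ Finset.univ.biUnion (fun i => match ts i with | Tm.var x => {x} | _ => ∅)
  | .all y φ => FV φ \ {y}

/-- A sentence (closed formula). -/
def closed (φ : Form n C Ap) : Prop := FV φ = ∅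

/-- Universal closure of a formula. -/
def closure (φ : Form n C Ap) : Form n C Ap := ((FV φ).sort (· ≤ ·)).foldr Form.all φ

def size : Form n C Ap → ℕ
  | .atom _ => 1
  | .neg φ => size φ + 1
  | .and φ ψ => size φ + size ψ + 1
  | .box _ φ => size φ + 1
  | .all _ φ => size φ + 1

theorem size_substT (t : Tm C) (x : ℕ) (φ : Form n C Ap) :
    size (substT t x φ) = size φ := by
  induction φ with
  | atom p => rfl
  | neg φ ih => simp [substT, size, ih]
  | and φ ψ ih1 ih2 => simp [substT, size, ih1, ih2]
  | box ts φ ih => simp [substT, size, ih]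
  | all y φ ih => by_cases h : y = x <;> simp [substT, size, h, ih]

/-- Whether a term occurs in a formula. -/
def occursT (t : Tm C) : Form n C Ap → Prop
  | .atom _ => False
  | .neg φ => occursT t φ
  | .and φ ψ => occursT t φ ∨ occursT t ψ
  | .box ts φ => (∃ i, ts i = t) ∨ occursT t φ
  | .all y φ => (t = Tm.var y) ∨ occursT t φ

end Form

/-- A concurrent game structure over a signature ⟨n, C, Ap⟩ (actions = constants). -/
structure CGS (n : ℕ) (C : Type) (Ap : Type) where
  S : Type
  R : S → (Fin n → C) → S → Prop
  V : Ap → S → Prop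

namespace CGS

variable {n : ℕ} {C Ap : Type}

def Serial (G : CGS n C Ap) : Prop := ∀ s d, ∃ t, G.R s d t

def Functional (G : CGS n C Ap) : Prop := ∀ s d t v, G.R s d t → G.R s d v → t = v

end CGS

/-- Satisfaction of (closed) formulas in a CGS. -/
def Sat {n : ℕ} {C Ap : Type} (G : CGS n C Ap) : G.S → Form n C Ap → Prop
  | s, .atom p => G.V p s
  | s, .neg φ => ¬ Sat G s φ
  | s, .and φ ψ => Sat G s φ ∧ Sat G s ψ
  | s, .box ts φ => ∃ d : Fin n → C, (∀ i, ts i = Tm.const (d i)) ∧ ∃ t, G.R s d t ∧ Sat G t φ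
  | s, .all x φ => ∀ a : C, Sat G s (Form.subst a x φ)
termination_by _ φ => Form.size φ
decreasing_by all_goals simp [Form.subst, Form.size_substT, Form.size] <;> omega

/-- Truth of a possibly open formula: truth of its universal closure. -/
def SatC {n : ℕ} {C Ap : Type} (G : CGS n C Ap) (s : G.S) (φ : Form n C Ap) : Prop :=
  Sat G s (Form.closure φ)

/-- Validity in a CGS. -/
def ValidIn {n : ℕ} {C Ap : Type} (G : CGS n C Ap) (φ : Form n C Ap) : Prop :=
  ∀ s : G.S, SatC G s φ

/-- Propositional evaluation treating atoms, boxes and quantified formulas as atomic. -/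
def evalP {n : ℕ} {C Ap : Type} (v : Form n C Ap → Prop) : Form n C Ap → Prop
  | .neg φ => ¬ evalP v φ
  | .and φ ψ => evalP v φ ∧ evalP v ψ
  | .atom p => v (.atom p)
  | .box ts φ => v (.box ts φ)
  | .all x φ => v (.all x φ)

/-- Propositional tautologies. -/
def Taut {n : ℕ} {C Ap : Type} (φ : Form n C Ap) : Prop :=
  ∀ v : Form n C Ap → Prop, evalP v φ

/-- The axiom system of first-order coalition logic. -/
inductive Deriv {n : ℕ} {C Ap : Type} : Form n C Ap → Prop
  | PC {φ} : Taut φ → Deriv φ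
  | K (ts : Fin n → Tm C) (φ ψ) :
      Deriv (Form.iff (.and (.box ts φ) (.box ts ψ)) (.box ts (.and φ ψ)))
  | N (ts : Fin n → Tm C) (φ) :
      Deriv (Form.iff (.neg (.box ts φ)) (.box ts (.neg φ)))
  | E (x : ℕ) (t : Tm C) (φ) : Deriv (Form.imp (.all x φ) (Form.substT t x φ))
  | B (ts : Fin n → Tm C) (x : ℕ) (φ) (h : ∀ i, ts i ≠ Tm.var x) :
      Deriv (Form.imp (.all x (.box ts φ)) (.box ts (.all x φ)))
  | MP {φ ψ} : Deriv (Form.imp φ ψ) → Deriv φ → Deriv ψ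
  | Nec (ts : Fin n → Tm C) {φ} : Deriv φ → Deriv (.box ts φ)
  | Gen {φ ψ} (t : Tm C) (x : ℕ) :
      Deriv (Form.imp φ (Form.substT t x ψ)) → ¬ Form.occursT t φ →
      Deriv (Form.imp φ (.all x ψ))

/-- Derivability from a set of formulas. -/
def DerivFrom {n : ℕ} {C Ap : Type} (X : Set (Form n C Ap)) (φ : Form n C Ap) : Prop :=
  ∃ L : List (Form n C Ap), (∀ ψ ∈ L, ψ ∈ X) ∧ Deriv (L.foldr Form.imp φ)

def Consistent {n : ℕ} {C Ap : Type} (X : Set (Form n C Ap)) : Prop :=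
  ¬ ∃ φ, DerivFrom X φ ∧ DerivFrom X (.neg φ)

/-- A set of sentences. -/
def SentenceSet {n : ℕ} {C Ap : Type} (X : Set (Form n C Ap)) : Prop :=
  ∀ φ ∈ X, Form.closed φ

/-- Maximal consistent set (of sentences). -/
def MCS {n : ℕ} {C Ap : Type} (X : Set (Form n C Ap)) : Prop :=
  Consistent X ∧ ∀ ψ, Form.closed ψ → ψ ∉ X → ¬ Consistent (insert ψ X)

/-- The ∀-property. -/
def AllProp {n : ℕ} {C Ap : Type} (X : Set (Form n C Ap)) : Prop :=
  ∀ (φ : Form n C Ap) (x : ℕ), Form.FV φ ⊆ {x} →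
    ∃ a : C, Form.imp (Form.subst a x φ) (.all x φ) ∈ X

/-- The canonical model. -/
def canonical (n : ℕ) (C Ap : Type) : CGS n C Ap where
  S := {X : Set (Form n C Ap) // SentenceSet X ∧ MCS X ∧ AllProp X}
  R := fun X d Y => ∀ φ, φ ∈ Y.1 → Form.box (fun i => Tm.const (d i)) φ ∈ X.1
  V := fun p X => Form.atom p ∈ X.1

/-- Renaming of constants. -/
def Tm.mapC {C C' : Type} (f : C → C') : Tm C → Tm C'
  | .var x => .var x
  | .const c => .const (f c)

def Form.mapC {n : ℕ} {C C' Ap : Type} (f : C → C') : Form n C Ap → Form n C' Ap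
  | .atom p => .atom p
  | .neg φ => .neg (mapC f φ)
  | .and φ ψ => .and (mapC f φ) (mapC f ψ)
  | .box ts φ => .box (fun i => (ts i).mapC f) (mapC f φ)
  | .all y φ => .all y (mapC f φ)


/-!
Induction on the size of the sentence. The Boolean cases are the usual properties of maximal
consistent sets. For `⟨ā⟩ψ` one needs the existence lemma: if `⟨ā⟩ψ ∈ X`, then
`{χ | ⟨ā⟩χ ∈ X}` is itself a state of the canonical model containing `ψ`. It is consistent by
necessitation and K, maximal because axiom N turns `¬⟨ā⟩χ` into `⟨ā⟩¬χ`, and it inherits the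
∀-property from `X` through the Barcan axiom B. For `∀x ψ`, axiom E gives one direction, and a
witness from the ∀-property of `X` gives the other.
-/

namespace Form

variable {n : ℕ} {C Ap : Type}

theorem closed_and_iff {φ ψ : Form n C Ap} : closed (.and φ ψ) ↔ closed φ ∧ closed ψ := by
  simp [closed, FV, Finset.union_eq_empty]

theorem closed_imp_iff {φ ψ : Form n C Ap} : closed (imp φ ψ) ↔ closed φ ∧ closed ψ :=
  closed_and_iff

theorem closed_all_iff {x : ℕ} {φ : Form n C Ap} : closed (.all x φ) ↔ FV φ ⊆ {x} := by
  rw [closed, FV, Finset.sdiff_eq_empty_iff_subset]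

theorem FV_box_const (d : Fin n → C) (φ : Form n C Ap) :
    FV (.box (fun i => .const (d i)) φ) = FV φ := by
  simp [FV]

theorem closed_box_iff {ts : Fin n → Tm C} {φ : Form n C Ap} :
    closed (.box ts φ) ↔ closed φ ∧ ∃ d : Fin n → C, ts = fun i => .const (d i) := by
  constructor
  · intro h
    obtain ⟨hφ, hts⟩ := Finset.union_eq_empty.1 h
    have hconst : ∀ i, ∃ c, ts i = .const c := fun i => by
      match hti : ts i with
      | .const c => exact ⟨c, rfl⟩
      | .var x =>
        have : x ∈ (∅ : Finset ℕ) :=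
          hts ▸ Finset.mem_biUnion.2 ⟨i, Finset.mem_univ i, by simp [hti]⟩
        simp at this
    choose d hd using hconst
    exact ⟨hφ, d, funext hd⟩
  · rintro ⟨hφ, d, rfl⟩
    rwa [closed, FV_box_const]

theorem substT_box_const (t : Tm C) (x : ℕ) (d : Fin n → C) (φ : Form n C Ap) :
    substT t x (.box (fun i => .const (d i)) φ) = .box (fun i => .const (d i)) (substT t x φ) := by
  simp [substT]

theorem FV_substT_const (a : C) (x : ℕ) (φ : Form n C Ap) :
    FV (substT (.const a) x φ) = FV φ \ {x} := by
  induction φ with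
  | atom p => simp [substT, FV]
  | neg φ ih => simpa [substT, FV] using ih
  | and φ ψ ih₁ ih₂ => simp only [substT, FV, ih₁, ih₂, Finset.union_sdiff_distrib]
  | box ts φ ih =>
    simp only [substT, FV, ih, Finset.union_sdiff_distrib]
    congr 1
    ext y
    simp only [Finset.mem_biUnion, Finset.mem_univ, true_and, Finset.mem_sdiff,
      Finset.mem_singleton, ← exists_and_right]
    refine exists_congr fun i => ?_
    split_ifs with h
    · simp [h]
    · cases hts : ts i <;> grind
  | all y φ ih =>
    by_cases h : y = x
    · subst h
      simp [substT, FV]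
    · simp only [substT, if_neg h, FV, ih]
      rw [Finset.sdiff_sdiff_left', Finset.sdiff_sdiff_left', Finset.inter_comm]

theorem closed_subst {a : C} {x : ℕ} {φ : Form n C Ap} (h : FV φ ⊆ {x}) :
    closed (subst a x φ) := by
  rw [closed, subst, FV_substT_const]
  exact Finset.sdiff_eq_empty_iff_subset.2 h

end Form

section Derivations

variable {n : ℕ} {C Ap : Type}

@[simp]
theorem evalP_imp (v : Form n C Ap → Prop) (φ ψ : Form n C Ap) :
    evalP v (Form.imp φ ψ) ↔ (evalP v φ → evalP v ψ) := by
  simp only [Form.imp, evalP]; tauto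

@[simp]
theorem evalP_foldr_imp (v : Form n C Ap → Prop) (L : List (Form n C Ap)) (ψ : Form n C Ap) :
    evalP v (L.foldr Form.imp ψ) ↔ ((∀ χ ∈ L, evalP v χ) → evalP v ψ) := by
  induction L with
  | nil => simp
  | cons χ L ih => simp only [List.foldr_cons, evalP_imp, ih, List.forall_mem_cons]; tauto

theorem Deriv.iff_mp {φ ψ : Form n C Ap} (h : Deriv (Form.iff φ ψ)) : Deriv (Form.imp φ ψ) :=
  .MP (.PC fun v => by simp only [Form.iff, Form.imp, evalP]; tauto) h

theorem Deriv.iff_mpr {φ ψ : Form n C Ap} (h : Deriv (Form.iff φ ψ)) : Deriv (Form.imp ψ φ) :=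
  .MP (.PC fun v => by simp only [Form.iff, Form.imp, evalP]; tauto) h

theorem deriv_box_imp_iff (ts : Fin n → Tm C) (φ ψ : Form n C Ap) :
    Deriv (Form.iff (.box ts (Form.imp φ ψ)) (Form.imp (.box ts φ) (.box ts ψ))) := by
  refine .MP (.MP (.MP (.PC fun v => ?_) (.N ts (.and φ (.neg ψ)))) (.K ts φ (.neg ψ))) (.N ts ψ)
  simp only [Form.iff, Form.imp, evalP]
  tauto

theorem deriv_box_foldr_imp (ts : Fin n → Tm C) (L : List (Form n C Ap)) (ψ : Form n C Ap) :
    Deriv (Form.imp (.box ts (L.foldr Form.imp ψ))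
      ((L.map (.box ts)).foldr Form.imp (.box ts ψ))) := by
  induction L with
  | nil => exact .PC fun v => by simp
  | cons χ L ih =>
    refine .MP (.MP (.PC fun v => ?_) (deriv_box_imp_iff ts χ (L.foldr Form.imp ψ))) ih
    simp only [List.foldr_cons, List.map_cons, Form.iff, Form.imp, evalP]
    tauto

theorem DerivFrom.of_mem {X : Set (Form n C Ap)} {φ : Form n C Ap} (h : φ ∈ X) :
    DerivFrom X φ :=
  ⟨[φ], by simpa using h, .PC fun v => by simp⟩

theorem Deriv.derivFrom {X : Set (Form n C Ap)} {φ : Form n C Ap} (h : Deriv φ) :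
    DerivFrom X φ :=
  ⟨[], by simp, h⟩

theorem DerivFrom.mp {X : Set (Form n C Ap)} {φ ψ : Form n C Ap}
    (hφψ : DerivFrom X (Form.imp φ ψ)) (hφ : DerivFrom X φ) : DerivFrom X ψ := by
  obtain ⟨L₁, hL₁, hd₁⟩ := hφψ
  obtain ⟨L₂, hL₂, hd₂⟩ := hφ
  refine ⟨L₁ ++ L₂, fun χ hχ => (List.mem_append.1 hχ).elim (hL₁ χ) (hL₂ χ), ?_⟩
  refine .MP (.MP (.PC fun v => ?_) hd₁) hd₂
  simp only [evalP_imp, evalP_foldr_imp, List.forall_mem_append]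
  tauto

theorem DerivFrom.mp_taut {X : Set (Form n C Ap)} {φ ψ : Form n C Ap}
    (ht : Taut (Form.imp φ ψ)) (hφ : DerivFrom X φ) : DerivFrom X ψ :=
  (Deriv.PC ht).derivFrom.mp hφ

theorem DerivFrom.mp_taut₂ {X : Set (Form n C Ap)} {φ ψ χ : Form n C Ap}
    (ht : Taut (Form.imp φ (Form.imp ψ χ))) (hφ : DerivFrom X φ) (hψ : DerivFrom X ψ) :
    DerivFrom X χ :=
  ((Deriv.PC ht).derivFrom.mp hφ).mp hψ

theorem DerivFrom.imp_of_insert {X : Set (Form n C Ap)} {φ ψ : Form n C Ap}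
    (h : DerivFrom (insert φ X) ψ) : DerivFrom X (Form.imp φ ψ) := by
  classical
  obtain ⟨L, hL, hd⟩ := h
  refine ⟨L.filter (· ∈ X), fun χ hχ => by simpa using (List.mem_filter.1 hχ).2, .MP (.PC ?_) hd⟩
  intro v
  simp only [evalP_imp, evalP_foldr_imp, List.mem_filter, decide_eq_true_eq]
  intro h hX hφ
  exact h fun χ hχ => (hL χ hχ).elim (fun he => he ▸ hφ) fun hχX => hX χ ⟨hχ, hχX⟩

end Derivations

namespace MCS

variable {n : ℕ} {C Ap : Type} {X : Set (Form n C Ap)}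

theorem mem_of_derivFrom (hX : MCS X) {φ : Form n C Ap} (hcl : Form.closed φ)
    (h : DerivFrom X φ) : φ ∈ X := by
  by_contra hφ
  obtain ⟨ψ, h₁, h₂⟩ := not_not.1 (hX.2 φ hcl hφ)
  have ht : ∀ χ : Form n C Ap, Taut (Form.imp (Form.imp φ χ) (Form.imp φ χ)) :=
    fun χ v => by simp
  exact hX.1 ⟨ψ, .mp_taut₂ (ht ψ) h₁.imp_of_insert h, .mp_taut₂ (ht _) h₂.imp_of_insert h⟩

theorem mem_of_deriv_imp (hX : MCS X) {φ ψ : Form n C Ap} (hd : Deriv (Form.imp φ ψ))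
    (hφ : φ ∈ X) (hcl : Form.closed ψ) : ψ ∈ X :=
  hX.mem_of_derivFrom hcl (hd.derivFrom.mp (.of_mem hφ))

theorem neg_mem_iff (hX : MCS X) {φ : Form n C Ap} (hcl : Form.closed φ) :
    Form.neg φ ∈ X ↔ φ ∉ X := by
  refine ⟨fun h hφ => hX.1 ⟨φ, .of_mem hφ, .of_mem h⟩, fun hφ => ?_⟩
  obtain ⟨ψ, h₁, h₂⟩ := not_not.1 (hX.2 φ hcl hφ)
  refine hX.mem_of_derivFrom hcl (.mp_taut₂ (fun v => ?_) h₁.imp_of_insert h₂.imp_of_insert)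
  simp only [evalP_imp, evalP]
  tauto

theorem and_mem_iff (hX : MCS X) {φ ψ : Form n C Ap} (hφ : Form.closed φ)
    (hψ : Form.closed ψ) : Form.and φ ψ ∈ X ↔ φ ∈ X ∧ ψ ∈ X := by
  refine ⟨fun h => ⟨?_, ?_⟩, fun ⟨h₁, h₂⟩ => ?_⟩
  · refine hX.mem_of_derivFrom hφ (.mp_taut (fun v => ?_) (.of_mem h))
    simp only [evalP_imp, evalP]
    tauto
  · refine hX.mem_of_derivFrom hψ (.mp_taut (fun v => ?_) (.of_mem h))
    simp only [evalP_imp, evalP]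
    tauto
  · refine hX.mem_of_derivFrom (Form.closed_and_iff.2 ⟨hφ, hψ⟩)
      (.mp_taut₂ (fun v => ?_) (.of_mem h₁) (.of_mem h₂))
    simp only [evalP_imp, evalP]
    tauto

end MCS

section ExistenceLemma

variable {n : ℕ} {C Ap : Type} {X : Set (Form n C Ap)}

def unbox (X : Set (Form n C Ap)) (d : Fin n → C) : Set (Form n C Ap) :=
  {ψ | Form.closed ψ ∧ .box (fun i => .const (d i)) ψ ∈ X}

theorem DerivFrom.box_of_unbox {d : Fin n → C} {ψ : Form n C Ap}
    (h : DerivFrom (unbox X d) ψ) : DerivFrom X (.box (fun i => .const (d i)) ψ) := by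
  obtain ⟨L, hL, hd⟩ := h
  refine ⟨L.map (.box fun i => .const (d i)), ?_, .MP (deriv_box_foldr_imp _ L ψ) (.Nec _ hd)⟩
  simpa using fun χ hχ => (hL χ hχ).2

theorem Consistent.unbox (hX : Consistent X) (d : Fin n → C) : Consistent (unbox X d) := by
  rintro ⟨ψ, h₁, h₂⟩
  exact hX ⟨_, h₁.box_of_unbox, (Deriv.N _ ψ).iff_mpr.derivFrom.mp h₂.box_of_unbox⟩

theorem MCS.unbox (hX : MCS X) (d : Fin n → C) : MCS (unbox X d) := by
  refine ⟨hX.1.unbox d, fun ψ hψ hψX hcon => hcon ⟨ψ, .of_mem (Set.mem_insert _ _),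
    .of_mem (Set.mem_insert_of_mem _ ⟨hψ, ?_⟩)⟩⟩
  have hcl : Form.closed (.box (fun i => .const (d i)) ψ) := Form.closed_box_iff.2 ⟨hψ, d, rfl⟩
  have hneg : Form.neg (.box (fun i => .const (d i)) ψ) ∈ X :=
    (hX.neg_mem_iff hcl).2 fun h => hψX ⟨hψ, h⟩
  exact hX.mem_of_deriv_imp (Deriv.N _ ψ).iff_mp hneg hcl

theorem AllProp.unbox (hA : AllProp X) (hX : MCS X) (d : Fin n → C) : AllProp (unbox X d) := by
  intro φ x hx
  obtain ⟨a, ha⟩ := hA (.box (fun i => .const (d i)) φ) x (by rwa [Form.FV_box_const])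
  rw [Form.subst, Form.substT_box_const] at ha
  have hcl : Form.closed (Form.imp (Form.subst a x φ) (.all x φ)) :=
    Form.closed_imp_iff.2 ⟨Form.closed_subst hx, Form.closed_all_iff.2 hx⟩
  have hB : Deriv (Form.imp (.all x (.box (fun i => .const (d i)) φ))
      (.box (fun i => .const (d i)) (.all x φ))) := .B _ x φ fun i => by simp
  refine ⟨a, hcl, hX.mem_of_derivFrom (Form.closed_box_iff.2 ⟨hcl, d, rfl⟩) ?_⟩
  refine (deriv_box_imp_iff _ _ _).iff_mpr.derivFrom.mp (.mp_taut₂ ?_ (.of_mem ha) hB.derivFrom)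
  intro v
  simp only [evalP_imp]
  tauto

theorem exists_canonical_succ (X : (canonical n C Ap).S) (d : Fin n → C) {ψ : Form n C Ap}
    (hψ : Form.closed ψ) (h : .box (fun i => .const (d i)) ψ ∈ X.1) :
    ∃ Y : (canonical n C Ap).S, (canonical n C Ap).R X d Y ∧ ψ ∈ Y.1 :=
  ⟨⟨unbox X.1 d, fun _ hφ => hφ.1, X.2.2.1.unbox d, X.2.2.2.unbox X.2.2.1 d⟩,
    fun _ hφ => hφ.2, hψ, h⟩

end ExistenceLemma

section TruthLemma

variable {n : ℕ} {C Ap : Type}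

theorem sat_canonical_box_iff {X : (canonical n C Ap).S} {ts : Fin n → Tm C} {φ : Form n C Ap}
    (hcl : Form.closed (.box ts φ))
    (ih : ∀ Y : (canonical n C Ap).S, Sat (canonical n C Ap) Y φ ↔ φ ∈ Y.1) :
    Sat (canonical n C Ap) X (.box ts φ) ↔ .box ts φ ∈ X.1 := by
  obtain ⟨hφ, d, rfl⟩ := Form.closed_box_iff.1 hcl
  rw [Sat]
  constructor
  · rintro ⟨d', hd', Y, hR, hY⟩
    obtain rfl : d' = d := funext fun i => by simpa using (hd' i).symm
    exact hR φ ((ih Y).1 hY)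
  · intro h
    obtain ⟨Y, hR, hY⟩ := exists_canonical_succ X d hφ h
    exact ⟨d, fun i => rfl, Y, hR, (ih Y).2 hY⟩

theorem sat_canonical_all_iff {X : (canonical n C Ap).S} {x : ℕ} {φ : Form n C Ap}
    (hcl : Form.closed (.all x φ))
    (ih : ∀ a : C, Sat (canonical n C Ap) X (Form.subst a x φ) ↔ Form.subst a x φ ∈ X.1) :
    Sat (canonical n C Ap) X (.all x φ) ↔ .all x φ ∈ X.1 := by
  have hx := Form.closed_all_iff.1 hcl
  obtain ⟨-, hX, hA⟩ := X.2
  rw [Sat]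
  constructor
  · intro h
    obtain ⟨a, ha⟩ := hA φ x hx
    exact hX.mem_of_derivFrom hcl ((DerivFrom.of_mem ha).mp (.of_mem ((ih a).1 (h a))))
  · exact fun h a => (ih a).2 (hX.mem_of_deriv_imp (.E x (.const a) φ) h (Form.closed_subst hx))

end TruthLemma

/-- the Truth lemma for the canonical model. -/
theorem truth_lemma {n : ℕ} {C Ap : Type}
    (X : (canonical n C Ap).S) (φ : Form n C Ap) (hcl : Form.closed φ) :
    Sat (canonical n C Ap) X φ ↔ φ ∈ X.1 := by
  match φ with
  | .atom p => rw [Sat]; rfl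
  | .neg φ =>
    rw [Sat, truth_lemma X φ hcl]
    exact (X.2.2.1.neg_mem_iff (φ := φ) hcl).symm
  | .and φ ψ =>
    obtain ⟨hφ, hψ⟩ := Form.closed_and_iff.1 hcl
    rw [Sat, truth_lemma X φ hφ, truth_lemma X ψ hψ, X.2.2.1.and_mem_iff hφ hψ]
  | .box ts φ =>
    exact sat_canonical_box_iff hcl fun Y => truth_lemma Y φ (Form.closed_box_iff.1 hcl).1
  | .all x φ =>
    exact sat_canonical_all_iff hcl fun a =>
      truth_lemma X _ (Form.closed_subst (Form.closed_all_iff.1 hcl))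
termination_by φ.size
decreasing_by all_goals simp [Form.size, Form.subst, Form.size_substT]
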